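/- Let S be a finite set, p : S → ℝ, and let oY ∈ S with p(oY) ≠ 1. Define a sequence g : ℕ → ℝ recursively by g(0) = W(0, S, p) / (1 − p(oY)) and g(i+1) = (W(i+1, S, p) − g(i) · p(oY)) / (1 − p(oY)). Then g(i) = W(i, S \ {oY}, p) for every natural number i. (This is the correctness of the paper's adjustProbs algorithm, which recovers all probabilities P_{i, S^{oX} \ {oY}, x} from the stored probabilities P_{i, S^{oX}, x} by a single forward recursion.) -/

import Mathlib

/-- Rank-probability polynomial: probability that exactly `i` of the objects in `S`
occur, where object `o` occurs with probability `p o`. -/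
def W {α : Type*} [DecidableEq α] (i : ℕ) (S : Finset α) (p : α → ℝ) : ℝ :=
  ∑ T ∈ S.powersetCard i, (∏ o ∈ T, p o) * ∏ o ∈ S \ T, (1 - p o)

/-! Adding an object `x ∉ s` multiplies the generating polynomial `∑ᵢ W i s p Xⁱ` by
`(1 - p x) + p x X`. The recursion for `g` is division of the polynomial of `S` by this linear
factor for `x = oY`, coefficient by coefficient, which works because its constant term
`1 - p oY` is nonzero. -/

namespace Finset

theorem sum_powersetCard_succ_insert {α β : Type*} [DecidableEq α] [AddCommMonoid β]
    {x : α} {s : Finset α} (hx : x ∉ s) (n : ℕ) (f : Finset α → β) :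
    ∑ t ∈ (insert x s).powersetCard (n + 1), f t =
      ∑ t ∈ s.powersetCard (n + 1), f t + ∑ t ∈ s.powersetCard n, f (insert x t) := by
  have hxt : ∀ t ∈ s.powersetCard n, x ∉ t := fun t ht h => hx ((mem_powersetCard.1 ht).1 h)
  rw [powersetCard_succ_insert hx, sum_union, sum_image]
  · exact insert_erase_invOn.2.injOn.mono hxt
  · rw [disjoint_right]
    rintro _ ht hts
    obtain ⟨t, -, rfl⟩ := mem_image.1 ht
    exact hx ((mem_powersetCard.1 hts).1 (mem_insert_self x t))

end Finset

section RankProbability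

variable {α : Type*} [DecidableEq α] {s : Finset α} {x : α}

theorem W_zero_insert (p : α → ℝ) (hx : x ∉ s) :
    W 0 (insert x s) p = (1 - p x) * W 0 s p := by
  simp [W, Finset.prod_insert hx]

theorem W_succ_insert (p : α → ℝ) (hx : x ∉ s) (n : ℕ) :
    W (n + 1) (insert x s) p = (1 - p x) * W (n + 1) s p + p x * W n s p := by
  rw [W, Finset.sum_powersetCard_succ_insert hx, W, W, Finset.mul_sum, Finset.mul_sum]
  congr 1 <;> refine Finset.sum_congr rfl fun T hT => ?_
  all_goals have hxT : x ∉ T := fun h => hx ((Finset.mem_powersetCard.1 hT).1 h)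
  · rw [Finset.insert_sdiff_of_notMem _ hxT, Finset.prod_insert fun h => hx (Finset.sdiff_subset h)]
    ring
  · rw [Finset.prod_insert hxT, Finset.insert_sdiff_insert, Finset.sdiff_insert_of_notMem hx]
    ring

end RankProbability

/-- Correctness of `adjustProbs`: if `g(0) = W(0, S, p) / (1 − p(oY))` and
`g(i+1) = (W(i+1, S, p) − g(i) · p(oY)) / (1 − p(oY))`, then
`g(i) = W(i, S \ {oY}, p)` for every `i`. -/
theorem adjustProbs_correct {α : Type*} [DecidableEq α] (S : Finset α) (p : α → ℝ)
    (oY : α) (hoY : oY ∈ S) (hp : p oY ≠ 1) (g : ℕ → ℝ)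
    (hg0 : g 0 = W 0 S p / (1 - p oY))
    (hg : ∀ i : ℕ, g (i + 1) = (W (i + 1) S p - g i * p oY) / (1 - p oY)) :
    ∀ i : ℕ, g i = W i (S.erase oY) p := by
  have hq : (1 : ℝ) - p oY ≠ 0 := sub_ne_zero.2 hp.symm
  have hY : oY ∉ S.erase oY := Finset.notMem_erase oY S
  rw [← Finset.insert_erase hoY] at hg0 hg
  intro i
  induction i with
  | zero =>
    rw [hg0, W_zero_insert p hY]
    field_simp
  | succ n ih =>
    rw [hg n, ih, W_succ_insert p hY n]
    field_simp
    ring
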